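/- Let j, k ≥ 1 and let Υ ⊆ F_{j,k}. Let A_{n,k}^Υ be the number of F ∈ F_{n,k} with no Υ-matches (A_{0,k}^Υ = 1), and let E_{n,k}^Υ be the number of F ∈ F_{n,k} having exactly one Υ-match, which moreover starts at position n−j+1. Then the following identity of formal power series in t over ℚ holds: Σ_{n≥1} E_{n,k}^Υ t^n/(kn)! = 1 + (t/k! − 1)·(1 + Σ_{n≥1} A_{n,k}^Υ t^n/(kn)!). -/

import Mathlib

/-- `F` is a filling of the `k × n` rectangle (row `i`, `1 ≤ i ≤ k`, counted from the
bottom; column `j`, `1 ≤ j ≤ n`) with the integers `1, …, kn`, each used exactly once,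
whose entries strictly increase up each column.  Cells outside the rectangle carry `0`. -/
def IsFilling (n k : ℕ) (F : ℕ → ℕ → ℕ) : Prop :=
  (∀ i j, F i j ≠ 0 → 1 ≤ i ∧ i ≤ k ∧ 1 ≤ j ∧ j ≤ n) ∧
  Set.BijOn (fun p : ℕ × ℕ => F p.1 p.2) (Set.Icc 1 k ×ˢ Set.Icc 1 n) (Set.Icc 1 (k * n)) ∧
  ∀ i j, 1 ≤ i → i < k → 1 ≤ j → j ≤ n → F i j < F (i + 1) j

/-- The entries of `F` in columns `i, …, i + j - 1` are in the same relative order as the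
`k × j` pattern `P`; i.e. `F` has a `P`-match starting at position `i`. -/
def MatchAt (j k : ℕ) (P F : ℕ → ℕ → ℕ) (i : ℕ) : Prop :=
  ∀ a b c d, 1 ≤ a → a ≤ k → 1 ≤ b → b ≤ j → 1 ≤ c → c ≤ k → 1 ≤ d → d ≤ j →
    (F a (i - 1 + b) < F c (i - 1 + d) ↔ P a b < P c d)

/-- `full_n^Υ`: the number of fillings `F ∈ F_{n,k}` having `Υ`-matches starting at
every position `1, …, n-1` (for two-column patterns `Υ ⊆ F_{2,k}`). -/
noncomputable def fullCount (n k : ℕ) (U : Set (ℕ → ℕ → ℕ)) : ℕ :=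
  Nat.card {F : ℕ → ℕ → ℕ // IsFilling n k F ∧
    ∀ i, 1 ≤ i → i ≤ n - 1 → ∃ P ∈ U, MatchAt 2 k P F i}

/-- `F` has an `Υ`-match starting at position `i` (for `k × j` patterns `Υ`). -/
def HasUMatch (n j k : ℕ) (U : Set (ℕ → ℕ → ℕ)) (F : ℕ → ℕ → ℕ) (i : ℕ) : Prop :=
  1 ≤ i ∧ i + j ≤ n + 1 ∧ ∃ P ∈ U, MatchAt j k P F i

/-- `A_{n,k}^Υ`: the number of fillings `F ∈ F_{n,k}` with no `Υ`-matches. -/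
noncomputable def noMatchCountJ (n j k : ℕ) (U : Set (ℕ → ℕ → ℕ)) : ℕ :=
  Nat.card {F : ℕ → ℕ → ℕ // IsFilling n k F ∧ ∀ i, ¬ HasUMatch n j k U F i}

/-- `E_{n,k}^Υ`: the number of fillings `F ∈ F_{n,k}` with exactly one `Υ`-match,
which starts at position `n - j + 1`. -/
noncomputable def endMatchCount (n j k : ℕ) (U : Set (ℕ → ℕ → ℕ)) : ℕ :=
  Nat.card {F : ℕ → ℕ → ℕ // IsFilling n k F ∧
    ∀ i, HasUMatch n j k U F i ↔ i = n + 1 - j}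

/-!
Deleting the last column of a filling of `k × (n + 1)` and standardizing the other entries
is a bijection onto the pairs (a `k`-subset of `[1, k(n+1)]`, a filling of `k × n`), and it
preserves the matches lying in the first `n` columns. So the fillings of `k × (n + 1)` with no
`Υ`-match in their first `n` columns number `C(k(n+1), k) · A_n`; each of them has either no
match or exactly one, at the last position, whence `E_{n+1} + A_{n+1} = C(k(n+1), k) · A_n`.
Divided by `(k(n+1))!` this is the coefficient of `t^(n+1)` in the claimed identity.
-/

section Rank

variable {c : Finset ℕ} {m x : ℕ}

/-- The `m`-th smallest element of `c`, counting from `1`; `0` when `m ∉ [1, #c]`. -/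
noncomputable def nthSmallest (c : Finset ℕ) (m : ℕ) : ℕ :=
  if h : 1 ≤ m ∧ m ≤ c.card then (c.orderIsoOfFin rfl ⟨m - 1, by omega⟩ : ℕ) else 0

/-- The position of `x` in `c` listed increasingly, counting from `1`; `0` when `x ∉ c`. -/
noncomputable def rankIn (c : Finset ℕ) (x : ℕ) : ℕ :=
  if h : x ∈ c then ((c.orderIsoOfFin rfl).symm ⟨x, h⟩ : ℕ) + 1 else 0

lemma nthSmallest_of_not_mem_Icc (h : ¬(1 ≤ m ∧ m ≤ c.card)) : nthSmallest c m = 0 :=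
  dif_neg h

lemma nthSmallest_mem (h1 : 1 ≤ m) (h2 : m ≤ c.card) : nthSmallest c m ∈ c := by
  rw [nthSmallest, dif_pos ⟨h1, h2⟩]
  exact Subtype.prop _

lemma strictMonoOn_nthSmallest : StrictMonoOn (nthSmallest c) (Set.Icc 1 c.card) := by
  rintro m ⟨hm1, hm2⟩ m' ⟨hm1', hm2'⟩ hlt
  rw [nthSmallest, dif_pos ⟨hm1, hm2⟩, nthSmallest, dif_pos ⟨hm1', hm2'⟩, Subtype.coe_lt_coe,
    OrderIso.lt_iff_lt, Fin.mk_lt_mk]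
  omega

lemma rankIn_of_not_mem (hx : x ∉ c) : rankIn c x = 0 :=
  dif_neg hx

lemma rankIn_mem_Icc (hx : x ∈ c) : rankIn c x ∈ Set.Icc 1 c.card := by
  rw [rankIn, dif_pos hx]
  exact ⟨by omega, Fin.is_lt _⟩

lemma nthSmallest_rankIn (hx : x ∈ c) : nthSmallest c (rankIn c x) = x := by
  obtain ⟨h1, h2⟩ := rankIn_mem_Icc hx
  rw [nthSmallest, dif_pos ⟨h1, h2⟩]
  simp only [rankIn, dif_pos hx, Nat.add_sub_cancel, Fin.eta, OrderIso.apply_symm_apply]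

lemma rankIn_nthSmallest (h1 : 1 ≤ m) (h2 : m ≤ c.card) : rankIn c (nthSmallest c m) = m :=
  strictMonoOn_nthSmallest.injOn (rankIn_mem_Icc (nthSmallest_mem h1 h2)) ⟨h1, h2⟩
    (nthSmallest_rankIn (nthSmallest_mem h1 h2))

lemma strictMonoOn_rankIn : StrictMonoOn (rankIn c) c := by
  intro x hx y hy hlt
  rw [← strictMonoOn_nthSmallest.lt_iff_lt (rankIn_mem_Icc hx) (rankIn_mem_Icc hy),
    nthSmallest_rankIn hx, nthSmallest_rankIn hy]
  exact hlt

lemma bijOn_nthSmallest : Set.BijOn (nthSmallest c) (Set.Icc 1 c.card) c :=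
  ⟨fun _ hm => nthSmallest_mem hm.1 hm.2, strictMonoOn_nthSmallest.injOn,
    fun x hx => ⟨rankIn c x, rankIn_mem_Icc hx, nthSmallest_rankIn hx⟩⟩

lemma bijOn_rankIn : Set.BijOn (rankIn c) c (Set.Icc 1 c.card) :=
  ⟨fun _ hx => rankIn_mem_Icc hx, strictMonoOn_rankIn.injOn,
    fun m hm => ⟨nthSmallest c m, nthSmallest_mem hm.1 hm.2, rankIn_nthSmallest hm.1 hm.2⟩⟩

lemma nthSmallest_eq_of_strictMonoOn {f : ℕ → ℕ} (hf : StrictMonoOn f (Set.Icc 1 c.card))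
    (hfc : (Finset.Icc 1 c.card).image f = c) (h1 : 1 ≤ m) (h2 : m ≤ c.card) :
    nthSmallest c m = f m := by
  have hmem : ∀ t : Fin c.card, f (t + 1) ∈ c := fun t => by
    have := Finset.mem_image_of_mem f (Finset.mem_Icc.2 ⟨by omega, t.is_lt⟩ :
      (t : ℕ) + 1 ∈ Finset.Icc 1 c.card)
    rwa [hfc] at this
  have hmono : StrictMono fun t : Fin c.card => f (t + 1) := fun t t' htt =>
    hf ⟨by omega, t.is_lt⟩ ⟨by omega, t'.is_lt⟩ (by simpa using htt)
  have := congrFun (Finset.orderEmbOfFin_unique rfl hmem hmono) ⟨m - 1, by omega⟩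
  rw [nthSmallest, dif_pos ⟨h1, h2⟩, Finset.coe_orderIsoOfFin_apply, ← this]
  simp only [Nat.sub_add_cancel h1]

end Rank

section Filling

variable {n k : ℕ} {F : ℕ → ℕ → ℕ} {i x : ℕ}

lemma IsFilling.eq_zero (hF : IsFilling n k F) (h : ¬(1 ≤ i ∧ i ≤ k ∧ 1 ≤ x ∧ x ≤ n)) :
    F i x = 0 :=
  by_contra fun hne => h (hF.1 i x hne)

lemma IsFilling.mem_Icc (hF : IsFilling n k F) (hi : i ∈ Set.Icc 1 k) (hx : x ∈ Set.Icc 1 n) :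
    F i x ∈ Set.Icc 1 (k * n) :=
  hF.2.1.mapsTo (Set.mk_mem_prod hi hx)

lemma IsFilling.le (hF : IsFilling n k F) (i x : ℕ) : F i x ≤ k * n := by
  by_cases h : 1 ≤ i ∧ i ≤ k ∧ 1 ≤ x ∧ x ≤ n
  · exact (hF.mem_Icc ⟨h.1, h.2.1⟩ ⟨h.2.2.1, h.2.2.2⟩).2
  · rw [hF.eq_zero h]
    exact Nat.zero_le _

lemma IsFilling.strictMonoOn_column (hF : IsFilling n k F) (hx : x ∈ Set.Icc 1 n) :
    StrictMonoOn (F · x) (Set.Icc 1 k) :=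
  strictMonoOn_of_lt_add_one Set.ordConnected_Icc fun i _ hi hi' =>
    hF.2.2 i x hi.1 (by simpa using hi'.2) hx.1 hx.2

lemma finite_setOf_isFilling (n k : ℕ) : {F | IsFilling n k F}.Finite := by
  let extend (G : Fin (k + 1) → Fin (n + 1) → Fin (k * n + 1)) : ℕ → ℕ → ℕ :=
    fun i x => if h : i ≤ k ∧ x ≤ n then G ⟨i, by omega⟩ ⟨x, by omega⟩ else 0
  refine (Set.finite_range extend).subset fun F hF => ?_
  refine ⟨fun i x => ⟨F i x, Nat.lt_succ_of_le (hF.le i x)⟩, funext₂ fun i x => ?_⟩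
  by_cases h : i ≤ k ∧ x ≤ n
  · simp [extend, h]
  · simp only [extend, dif_neg h]
    exact (hF.eq_zero (by omega)).symm

end Filling

noncomputable def lastColumn (n k : ℕ) (F : ℕ → ℕ → ℕ) : Finset ℕ :=
  (Finset.Icc 1 k).image (F · n)

/-- The filling of `k × (n + 1)` whose last column holds `s` and whose first `n` columns hold
the remaining values of `[1, k(n+1)]`, in the same relative order as `G`. -/
noncomputable def appendColumn (n k : ℕ) (s : Finset ℕ) (G : ℕ → ℕ → ℕ) : ℕ → ℕ → ℕ :=
  fun i x => if x = n + 1 then nthSmallest s i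
    else nthSmallest (Finset.Icc 1 (k * (n + 1)) \ s) (G i x)

/-- The standardization of the first `n` columns of a filling of `k × (n + 1)`. The entries of
the last column are not ranked, so they become `0`. -/
noncomputable def dropLastColumn (n k : ℕ) (F : ℕ → ℕ → ℕ) : ℕ → ℕ → ℕ :=
  fun i x => rankIn (Finset.Icc 1 (k * (n + 1)) \ lastColumn (n + 1) k F) (F i x)

lemma rectangle_succ (n k : ℕ) :
    Set.Icc 1 k ×ˢ Set.Icc 1 (n + 1) = Set.Icc 1 k ×ˢ Set.Icc 1 n ∪ Set.Icc 1 k ×ˢ {n + 1} := by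
  ext ⟨i, x⟩
  simp only [Set.mem_union, Set.mem_prod, Set.mem_Icc, Set.mem_singleton_iff]
  omega

section AppendColumn

variable {n k : ℕ} {s : Finset ℕ} {G : ℕ → ℕ → ℕ}

lemma card_Icc_sdiff (hs : s ⊆ Finset.Icc 1 (k * (n + 1))) (hcard : s.card = k) :
    (Finset.Icc 1 (k * (n + 1)) \ s).card = k * n := by
  rw [Finset.card_sdiff_of_subset hs, Nat.card_Icc, hcard]
  ring_nf
  omega

lemma bijOn_appendColumn (hs : s ⊆ Finset.Icc 1 (k * (n + 1))) (hcard : s.card = k)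
    (hG : IsFilling n k G) :
    Set.BijOn (fun p : ℕ × ℕ => appendColumn n k s G p.1 p.2)
      (Set.Icc 1 k ×ˢ Set.Icc 1 (n + 1)) (Set.Icc 1 (k * (n + 1))) := by
  set c := Finset.Icc 1 (k * (n + 1)) \ s with hc
  have hcc : c.card = k * n := card_Icc_sdiff hs hcard
  have hfirst : Set.BijOn (fun p : ℕ × ℕ => appendColumn n k s G p.1 p.2)
      (Set.Icc 1 k ×ˢ Set.Icc 1 n) c := by
    refine (bijOn_nthSmallest.comp (hcc ▸ hG.2.1)).congr fun p hp => ?_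
    have hpn : p.2 ≠ n + 1 := by have := hp.2.2; omega
    simp only [Function.comp, appendColumn, if_neg hpn, hc]
  have hlast : Set.BijOn (fun p : ℕ × ℕ => appendColumn n k s G p.1 p.2)
      (Set.Icc 1 k ×ˢ {n + 1}) s := by
    have hcol : ∀ p ∈ Set.Icc 1 k ×ˢ {n + 1},
        appendColumn n k s G p.1 p.2 = nthSmallest s p.1 := by
      rintro ⟨i, x⟩ ⟨-, rfl⟩
      exact if_pos rfl
    refine ⟨fun p hp => ?_, fun p hp q hq hpq => ?_, fun y hy => ?_⟩
    · dsimp only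
      rw [hcol p hp]
      exact nthSmallest_mem hp.1.1 (hcard ▸ hp.1.2)
    · dsimp only at hpq
      rw [hcol p hp, hcol q hq] at hpq
      exact Prod.ext (strictMonoOn_nthSmallest.injOn (hcard ▸ hp.1) (hcard ▸ hq.1) hpq)
        (hp.2.trans hq.2.symm)
    · obtain ⟨i, hi, rfl⟩ := bijOn_nthSmallest.surjOn hy
      exact ⟨(i, n + 1), ⟨hcard ▸ hi, rfl⟩, hcol _ ⟨hcard ▸ hi, rfl⟩⟩
  have htarget : Set.Icc 1 (k * (n + 1)) = ↑c ∪ ↑s := by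
    rw [← Finset.coe_union, hc, Finset.sdiff_union_of_subset hs, Finset.coe_Icc]
  rw [rectangle_succ, htarget]
  refine hfirst.union hlast ((Set.injOn_union ?_).2 ⟨hfirst.injOn, hlast.injOn, ?_⟩)
  · exact Set.disjoint_prod.2 (Or.inr (by simp))
  · intro p hp q hq hpq
    have := Finset.mem_sdiff.1 (hfirst.mapsTo hp)
    exact this.2 (hpq ▸ hlast.mapsTo hq)

lemma isFilling_appendColumn (hs : s ⊆ Finset.Icc 1 (k * (n + 1))) (hcard : s.card = k)
    (hG : IsFilling n k G) : IsFilling (n + 1) k (appendColumn n k s G) := by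
  have hcc := card_Icc_sdiff hs hcard
  refine ⟨fun i x hne => ?_, bijOn_appendColumn hs hcard hG, fun i x hi1 hik hx1 hxn => ?_⟩
  · unfold appendColumn at hne
    split_ifs at hne with hx
    · have : 1 ≤ i ∧ i ≤ s.card := by_contra fun h => hne (nthSmallest_of_not_mem_Icc h)
      omega
    · have := hG.1 i x fun h0 => hne (nthSmallest_of_not_mem_Icc (by omega))
      omega
  · unfold appendColumn
    split_ifs with hx
    · exact strictMonoOn_nthSmallest ⟨hi1, by omega⟩ ⟨by omega, by omega⟩ (Nat.lt_succ_self i)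
    · have h1 := hG.mem_Icc ⟨hi1, hik.le⟩ ⟨hx1, by omega⟩
      have h2 := hG.mem_Icc ⟨by omega, hik⟩ ⟨hx1, by omega⟩
      exact strictMonoOn_nthSmallest ⟨h1.1, hcc ▸ h1.2⟩ ⟨h2.1, hcc ▸ h2.2⟩
        (hG.2.2 i x hi1 hik hx1 (by omega))

lemma lastColumn_appendColumn (hcard : s.card = k) :
    lastColumn (n + 1) k (appendColumn n k s G) = s := by
  apply Finset.coe_injective
  simp only [lastColumn, appendColumn, Finset.coe_image, Finset.coe_Icc]
  exact hcard ▸ bijOn_nthSmallest.image_eq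

lemma dropLastColumn_appendColumn (hs : s ⊆ Finset.Icc 1 (k * (n + 1))) (hcard : s.card = k)
    (hG : IsFilling n k G) : dropLastColumn n k (appendColumn n k s G) = G := by
  set c := Finset.Icc 1 (k * (n + 1)) \ s with hc
  have hcc : c.card = k * n := card_Icc_sdiff hs hcard
  have hc0 : 0 ∉ c := fun h => by simp [hc] at h
  funext i x
  simp only [dropLastColumn, lastColumn_appendColumn hcard, appendColumn, ← hc]
  split_ifs with hx
  · rw [hG.eq_zero (by omega)]
    by_cases hi : 1 ≤ i ∧ i ≤ s.card
    · exact rankIn_of_not_mem fun h => (Finset.mem_sdiff.1 h).2 (nthSmallest_mem hi.1 hi.2)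
    · rw [nthSmallest_of_not_mem_Icc hi, rankIn_of_not_mem hc0]
  · by_cases h0 : G i x = 0
    · rw [h0, nthSmallest_of_not_mem_Icc (by omega), rankIn_of_not_mem hc0]
    · exact rankIn_nthSmallest (by omega) (hcc ▸ hG.le i x)

end AppendColumn

section DropLastColumn

variable {n k : ℕ} {F : ℕ → ℕ → ℕ}

lemma lastColumn_subset (hF : IsFilling (n + 1) k F) :
    lastColumn (n + 1) k F ⊆ Finset.Icc 1 (k * (n + 1)) := by
  intro y hy
  obtain ⟨i, hi, rfl⟩ := Finset.mem_image.1 hy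
  exact Finset.mem_Icc.2 <| hF.mem_Icc (by simpa using hi) ⟨by omega, le_rfl⟩

lemma card_lastColumn (hF : IsFilling (n + 1) k F) : (lastColumn (n + 1) k F).card = k := by
  rw [lastColumn, Finset.card_image_of_injOn, Nat.card_Icc, Nat.add_sub_cancel]
  intro i hi i' hi' h
  simp only [Finset.coe_Icc] at hi hi'
  exact (Prod.ext_iff.1 (hF.2.1.injOn (Set.mk_mem_prod hi ⟨by omega, le_rfl⟩)
    (Set.mk_mem_prod hi' ⟨by omega, le_rfl⟩) h)).1

lemma mem_sdiff_lastColumn (hF : IsFilling (n + 1) k F) {i x : ℕ} (hi : i ∈ Set.Icc 1 k)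
    (hx : x ∈ Set.Icc 1 n) : F i x ∈ Finset.Icc 1 (k * (n + 1)) \ lastColumn (n + 1) k F := by
  have hx' : x ∈ Set.Icc 1 (n + 1) := ⟨hx.1, by have := hx.2; omega⟩
  refine Finset.mem_sdiff.2 ⟨by simpa using hF.mem_Icc hi hx', fun h => ?_⟩
  obtain ⟨r, hr, hrx⟩ := Finset.mem_image.1 h
  have hnx : n + 1 = x := congrArg Prod.snd
    (hF.2.1.injOn (Set.mk_mem_prod (by simpa using hr) ⟨by omega, le_rfl⟩)
      (Set.mk_mem_prod hi hx') hrx)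
  exact absurd hx.2 (by omega)

lemma bijOn_dropLastColumn (hF : IsFilling (n + 1) k F) :
    Set.BijOn (fun p : ℕ × ℕ => dropLastColumn n k F p.1 p.2)
      (Set.Icc 1 k ×ˢ Set.Icc 1 n) (Set.Icc 1 (k * n)) := by
  set c := Finset.Icc 1 (k * (n + 1)) \ lastColumn (n + 1) k F with hc
  have hcc : c.card = k * n := card_Icc_sdiff (lastColumn_subset hF) (card_lastColumn hF)
  have hFc : Set.BijOn (fun p : ℕ × ℕ => F p.1 p.2) (Set.Icc 1 k ×ˢ Set.Icc 1 n) c := by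
    refine ⟨fun p hp => mem_sdiff_lastColumn hF hp.1 hp.2,
      hF.2.1.injOn.mono (Set.prod_mono le_rfl (Set.Icc_subset_Icc le_rfl n.le_succ)),
      fun y hy => ?_⟩
    obtain ⟨hy, hys⟩ := Finset.mem_sdiff.1 hy
    obtain ⟨⟨i, x⟩, ⟨hi, hx⟩, rfl⟩ := hF.2.1.surjOn (by simpa using hy)
    have hxn : x ≠ n + 1 := by
      rintro rfl
      exact hys (Finset.mem_image_of_mem _ (by simpa using hi))
    exact ⟨(i, x), ⟨hi, hx.1, by have := hx.2; omega⟩, rfl⟩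
  exact hcc ▸ bijOn_rankIn.comp hFc

lemma isFilling_dropLastColumn (hF : IsFilling (n + 1) k F) :
    IsFilling n k (dropLastColumn n k F) := by
  refine ⟨fun i x hne => ?_, bijOn_dropLastColumn hF, fun i x hi1 hik hx1 hxn => ?_⟩
  · have hmem : F i x ∈ Finset.Icc 1 (k * (n + 1)) \ lastColumn (n + 1) k F :=
      by_contra fun h => hne (rankIn_of_not_mem h)
    obtain ⟨hrange, hlast⟩ := Finset.mem_sdiff.1 hmem
    obtain ⟨hi1, hik, hx1, hxn⟩ := hF.1 i x (by simp only [Finset.mem_Icc] at hrange; omega)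
    have hx : x ≠ n + 1 := by
      rintro rfl
      exact hlast (Finset.mem_image_of_mem _ (Finset.mem_Icc.2 ⟨hi1, hik⟩))
    omega
  · exact strictMonoOn_rankIn (mem_sdiff_lastColumn hF ⟨hi1, hik.le⟩ ⟨hx1, hxn⟩)
      (mem_sdiff_lastColumn hF ⟨by omega, hik⟩ ⟨hx1, hxn⟩) (hF.2.2 i x hi1 hik hx1 (by omega))

lemma appendColumn_lastColumn_dropLastColumn (hF : IsFilling (n + 1) k F) :
    appendColumn n k (lastColumn (n + 1) k F) (dropLastColumn n k F) = F := by
  set s := lastColumn (n + 1) k F with hs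
  set c := Finset.Icc 1 (k * (n + 1)) \ s with hc
  have hcard : s.card = k := card_lastColumn hF
  funext i x
  simp only [appendColumn, dropLastColumn, ← hs, ← hc]
  split_ifs with hx
  · subst hx
    by_cases hi : 1 ≤ i ∧ i ≤ k
    · refine nthSmallest_eq_of_strictMonoOn (f := (F · (n + 1))) ?_ ?_ hi.1 (hcard ▸ hi.2)
      · rw [hcard]
        exact hF.strictMonoOn_column ⟨by omega, le_rfl⟩
      · rw [hcard, hs, lastColumn]
    · rw [nthSmallest_of_not_mem_Icc (hcard ▸ hi), hF.eq_zero (by omega)]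
  · by_cases hmem : F i x ∈ c
    · exact nthSmallest_rankIn hmem
    · rw [rankIn_of_not_mem hmem, nthSmallest_of_not_mem_Icc (by omega)]
      exact (hF.eq_zero fun h =>
        hmem (mem_sdiff_lastColumn hF ⟨h.1, h.2.1⟩ ⟨h.2.2.1, by omega⟩)).symm

end DropLastColumn

lemma matchAt_iff_of_strictMonoOn {j k i : ℕ} {P F G : ℕ → ℕ → ℕ} {f : ℕ → ℕ} {S : Set ℕ}
    (hf : StrictMonoOn f S)
    (hFG : ∀ a b, 1 ≤ a → a ≤ k → 1 ≤ b → b ≤ j →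
      G a (i - 1 + b) ∈ S ∧ F a (i - 1 + b) = f (G a (i - 1 + b))) :
    MatchAt j k P F i ↔ MatchAt j k P G i := by
  refine forall₄_congr fun a b c d => forall₄_congr fun ha hak hb hbj =>
    forall₄_congr fun hc hck hd hdj => iff_congr ?_ Iff.rfl
  obtain ⟨hS, hF⟩ := hFG a b ha hak hb hbj
  obtain ⟨hS', hF'⟩ := hFG c d hc hck hd hdj
  rw [hF, hF', hf.lt_iff_lt hS hS']

lemma hasUMatch_appendColumn_iff {n j k i : ℕ} {U : Set (ℕ → ℕ → ℕ)} {s : Finset ℕ}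
    {G : ℕ → ℕ → ℕ} (hs : s ⊆ Finset.Icc 1 (k * (n + 1))) (hcard : s.card = k)
    (hG : IsFilling n k G) :
    HasUMatch n j k U (appendColumn n k s G) i ↔ HasUMatch n j k U G i := by
  refine and_congr_right fun hi => and_congr_right fun hij => exists_congr fun P =>
    and_congr_right fun _ => matchAt_iff_of_strictMonoOn strictMonoOn_nthSmallest
      fun a b ha hak hb hbj => ⟨?_, if_neg (by omega)⟩
  rw [card_Icc_sdiff hs hcard]
  exact hG.mem_Icc ⟨ha, hak⟩ ⟨by omega, by omega⟩

section Counting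

variable {n j k : ℕ} {U : Set (ℕ → ℕ → ℕ)} {F : ℕ → ℕ → ℕ} {i : ℕ}

lemma HasUMatch.succ (h : HasUMatch n j k U F i) : HasUMatch (n + 1) j k U F i :=
  ⟨h.1, h.2.1.trans (n + 1).le_succ, h.2.2⟩

lemma HasUMatch.of_succ (h : HasUMatch (n + 1) j k U F i) (hi : i ≠ n + 1 + 1 - j) :
    HasUMatch n j k U F i :=
  ⟨h.1, by have := h.2.1; omega, h.2.2⟩

lemma noMatchCountJ_eq_ncard :
    noMatchCountJ n j k U = {F | IsFilling n k F ∧ ∀ i, ¬ HasUMatch n j k U F i}.ncard :=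
  rfl

lemma ncard_noMatch_firstColumns :
    {F | IsFilling (n + 1) k F ∧ ∀ i, ¬ HasUMatch n j k U F i}.ncard
      = (k * (n + 1)).choose k * noMatchCountJ n j k U := by
  have hchoose : (k * (n + 1)).choose k
      = (Finset.powersetCard k (Finset.Icc 1 (k * (n + 1)))).card := by
    rw [Finset.card_powersetCard, Nat.card_Icc, Nat.add_sub_cancel]
  rw [hchoose, noMatchCountJ_eq_ncard, ← Set.ncard_coe_finset, ← Set.ncard_prod]
  symm
  refine Set.ncard_congr (fun p _ => appendColumn n k p.1 p.2) (fun p hp => ?_)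
    (fun p q hp hq hpq => ?_) (fun F hF => ?_)
  · obtain ⟨hs, hcard⟩ := Finset.mem_powersetCard.1 hp.1
    exact ⟨isFilling_appendColumn hs hcard hp.2.1,
      fun i h => hp.2.2 i ((hasUMatch_appendColumn_iff hs hcard hp.2.1).1 h)⟩
  · obtain ⟨hs, hcard⟩ := Finset.mem_powersetCard.1 hp.1
    obtain ⟨hs', hcard'⟩ := Finset.mem_powersetCard.1 hq.1
    have hlast := lastColumn_appendColumn (n := n) (G := p.2) hcard
    rw [hpq, lastColumn_appendColumn hcard'] at hlast
    have hdrop := dropLastColumn_appendColumn hs hcard hp.2.1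
    rw [hpq, dropLastColumn_appendColumn hs' hcard' hq.2.1] at hdrop
    exact Prod.ext hlast.symm hdrop.symm
  · have hs := lastColumn_subset hF.1
    have hcard := card_lastColumn hF.1
    have hG := isFilling_dropLastColumn hF.1
    refine ⟨(lastColumn (n + 1) k F, dropLastColumn n k F),
      ⟨Finset.mem_powersetCard.2 ⟨hs, hcard⟩, hG, fun i h => hF.2 i ?_⟩,
      appendColumn_lastColumn_dropLastColumn hF.1⟩
    rw [← appendColumn_lastColumn_dropLastColumn hF.1]
    exact (hasUMatch_appendColumn_iff hs hcard hG).2 h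

lemma endMatchCount_add_noMatchCountJ :
    endMatchCount (n + 1) j k U + noMatchCountJ (n + 1) j k U
      = (k * (n + 1)).choose k * noMatchCountJ n j k U := by
  set S := {F | IsFilling (n + 1) k F ∧ ∀ i, ¬ HasUMatch n j k U F i}
  set T := {F | HasUMatch (n + 1) j k U F (n + 1 + 1 - j)}
  have hE : endMatchCount (n + 1) j k U = (S ∩ T).ncard := by
    refine Nat.card_congr (Equiv.subtypeEquivRight fun F => ⟨?_, ?_⟩)
    · rintro ⟨hF, hiff⟩
      refine ⟨⟨hF, fun i h => ?_⟩, (hiff _).2 rfl⟩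
      have := (hiff i).1 h.succ
      have := h.2.1
      omega
    · rintro ⟨⟨hF, hno⟩, hT⟩
      refine ⟨hF, fun i => ⟨fun h => by_contra fun hi => hno i (h.of_succ hi), fun hi => ?_⟩⟩
      subst hi
      exact hT
  have hA : noMatchCountJ (n + 1) j k U = (S \ T).ncard := by
    refine Nat.card_congr (Equiv.subtypeEquivRight fun F => ⟨?_, ?_⟩)
    · rintro ⟨hF, hno⟩
      exact ⟨⟨hF, fun i h => hno i h.succ⟩, hno _⟩
    · rintro ⟨⟨hF, hno⟩, hT⟩
      refine ⟨hF, fun i h => ?_⟩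
      by_cases hi : i = n + 1 + 1 - j
      · exact hT (by subst hi; exact h)
      · exact hno i (h.of_succ hi)
  rw [hE, hA, Set.ncard_inter_add_ncard_sdiff_eq_ncard S T
    ((finite_setOf_isFilling _ _).subset fun F hF => hF.1), ncard_noMatch_firstColumns]

lemma noMatchCountJ_zero (hj : 1 ≤ j) : noMatchCountJ 0 j k U = 1 := by
  rw [noMatchCountJ_eq_ncard, Set.ncard_eq_one]
  refine ⟨fun _ _ => 0, Set.eq_singleton_iff_unique_mem.2 ⟨⟨?_, fun i h => ?_⟩, ?_⟩⟩
  · refine ⟨fun i x h => absurd rfl h, ?_, fun i x _ _ hx1 hx0 => absurd hx1 (by omega)⟩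
    have hempty : Set.Icc 1 0 = (∅ : Set ℕ) := Set.Icc_eq_empty (by omega)
    rw [hempty, Set.prod_empty, Nat.mul_zero, hempty]
    exact Set.bijOn_empty _
  · have := h.2.1
    have := h.1
    omega
  · exact fun F hF => funext₂ fun i x => hF.1.eq_zero (by omega)

end Counting

lemma endMatchCount_div_factorial (n j k : ℕ) (U : Set (ℕ → ℕ → ℕ)) :
    (endMatchCount (n + 1) j k U : ℚ) / (k * (n + 1)).factorial
      = (k.factorial : ℚ)⁻¹ * (noMatchCountJ n j k U / (k * n).factorial)
        - noMatchCountJ (n + 1) j k U / (k * (n + 1)).factorial := by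
  have hrec : (endMatchCount (n + 1) j k U : ℚ)
      = (k * (n + 1)).choose k * noMatchCountJ n j k U - noMatchCountJ (n + 1) j k U := by
    rw [eq_sub_iff_add_eq]
    exact_mod_cast endMatchCount_add_noMatchCountJ
  have hchoose : ((k * (n + 1)).choose k : ℚ)
      = (k * (n + 1)).factorial / (k.factorial * (k * n).factorial) := by
    rw [Nat.cast_choose ℚ (Nat.le_mul_of_pos_right k n.succ_pos), Nat.mul_succ, Nat.add_sub_cancel]
  rw [hrec, hchoose]
  field_simp

theorem stmt7_general (j k : ℕ) (hj : 1 ≤ j) (U : Set (ℕ → ℕ → ℕ)) :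
    (PowerSeries.mk fun n => if n = 0 then (0 : ℚ) else
        (endMatchCount n j k U : ℚ) / ((k * n).factorial : ℚ)) =
    1 + (PowerSeries.C ((k.factorial : ℚ))⁻¹ * PowerSeries.X - 1) *
      PowerSeries.mk (fun n => if n = 0 then (1 : ℚ) else
        (noMatchCountJ n j k U : ℚ) / ((k * n).factorial : ℚ)) := by
  have hA : PowerSeries.mk (fun n => if n = 0 then (1 : ℚ) else
      (noMatchCountJ n j k U : ℚ) / ((k * n).factorial : ℚ))
      = PowerSeries.mk fun n => (noMatchCountJ n j k U : ℚ) / (k * n).factorial := by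
    congr 1
    funext n
    split_ifs with hn
    · simp [hn, noMatchCountJ_zero hj]
    · rfl
  rw [hA]
  ext (_ | n)
  · simp [noMatchCountJ_zero hj]
  · simp [sub_mul, mul_assoc, PowerSeries.coeff_succ_X_mul, endMatchCount_div_factorial]

/-- Theorem: `Σ_{n≥1} E_{n,k}^Υ t^n/(kn)! = 1 + (t/k! - 1)·(1 + Σ_{n≥1} A_{n,k}^Υ t^n/(kn)!)`
as formal power series in `t` over `ℚ`. -/
theorem stmt7 (j k : ℕ) (hj : 1 ≤ j) (hk : 1 ≤ k) (U : Set (ℕ → ℕ → ℕ))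
    (hU : ∀ P ∈ U, IsFilling j k P) :
    (PowerSeries.mk fun n => if n = 0 then (0 : ℚ) else
        (endMatchCount n j k U : ℚ) / ((k * n).factorial : ℚ)) =
    1 + (PowerSeries.C ((k.factorial : ℚ))⁻¹ * PowerSeries.X - 1) *
      PowerSeries.mk (fun n => if n = 0 then (1 : ℚ) else
        (noMatchCountJ n j k U : ℚ) / ((k * n).factorial : ℚ)) :=
  stmt7_general j k hj U
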